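/- arXiv:1007.4502 — 3 statements merged into one kernel-verified Lean document; each statement's English description precedes it below -/
import Mathlib

section
/- Let (K, v) be a differential field of characteristic zero containing ℂ with v vanishing on ℂ, let k ⊆ K be a subfield with v(k) ⊆ k, and let F ⊆ k be a subfield containing ℂ with v(F) ⊆ F. Let n ≥ 1, let G be a subgroup of GL_n(ℂ), and let G̃ be the subgroup of GL_n(ℂ) generated by G together with the scalar matrices ζ·1 with ζⁿ = 1. Let y = (y^i_j) ∈ GL_n(K) satisfy v(y^i_j) = Σ_l A^i_l y^l_j for a matrix A = (A^i_j) ∈ M_n(k), and assume that Q(y) ∈ F for every G̃-invariant polynomial Q ∈ ℂ[X^i_j]. Then there exists a matrix B = (B^i_j) ∈ M_n(F) such that for every G̃-invariant polynomial P ∈ ℂ[X^i_j] one has Σ_{ι,λ} ( Σ_κ (∂P/∂X^ι_κ)(y) · y^λ_κ ) · (A^ι_λ − B^ι_λ) = 0. -/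
open MvPolynomial Matrix

/-- Right translation action of a matrix `g` on `ℂ[X^i_j]`:
`X^i_j ↦ ∑ l, X^i_l g^l_j`. -/
noncomputable def rightTranslate {n : ℕ} (g : Matrix (Fin n) (Fin n) ℂ) :
    MvPolynomial (Fin n × Fin n) ℂ →ₐ[ℂ] MvPolynomial (Fin n × Fin n) ℂ :=
  aeval (fun p : Fin n × Fin n => ∑ l, X (p.1, l) * C (g l p.2))

/-- A polynomial is invariant under a subgroup `S ⊆ GL_n(ℂ)` if it is fixed by
right translation by every element of `S`. -/
def RTInvariant {n : ℕ} (S : Subgroup (GL (Fin n) ℂ))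
    (P : MvPolynomial (Fin n × Fin n) ℂ) : Prop :=
  ∀ g ∈ S, rightTranslate ((g : GL (Fin n) ℂ) : Matrix (Fin n) (Fin n) ℂ) P = P

/-- The subgroup generated by `G` together with the scalar matrices `ζ·1` with `ζ^n = 1`. -/
def Gtilde {n : ℕ} (G : Subgroup (GL (Fin n) ℂ)) : Subgroup (GL (Fin n) ℂ) :=
  Subgroup.closure ((G : Set (GL (Fin n) ℂ)) ∪
    {g : GL (Fin n) ℂ | ∃ ζ : ℂ, ζ ^ n = 1 ∧
      ((g : GL (Fin n) ℂ) : Matrix (Fin n) (Fin n) ℂ) = ζ • (1 : Matrix (Fin n) (Fin n) ℂ)})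

/-! The polarization operators `D_{ιλ} = ∑_κ X^λ_κ ∂/∂X^ι_κ` are derivations commuting with
right translation, so they preserve `G̃`-invariance and `(D_{ιλ}P)(y) ∈ F` for every invariant `P`.
By the chain rule and `v y = A y`, `v (P(y)) = ∑_{ι,λ} (D_{ιλ}P)(y) A^ι_λ`, which lies in `F`.
So pairing with `A` takes values in `F` on the `F`-span of the `F`-rational vectors
`((D_{ιλ}P)(y))_{ι,λ}`; extending this `F`-valued functional to all of `F^{n×n}` gives `B`. -/

theorem Derivation.map_aeval_eq_sum_pderiv {R A M σ : Type*} [CommSemiring R] [CommSemiring A]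
    [Algebra R A] [AddCommMonoid M] [Module A M] [Module R M] [IsScalarTower R A M] [Fintype σ]
    (D : Derivation R A M) (f : σ → A) (P : MvPolynomial σ R) :
    D (aeval f P) = ∑ i, aeval f (pderiv i P) • D (f i) := by
  classical
  induction P using MvPolynomial.induction_on with
  | C a => simp
  | add p q hp hq => simp only [map_add, hp, hq, add_smul, Finset.sum_add_distrib]
  | mul_X p j hp =>
    simp only [map_mul, aeval_X, Derivation.leibniz, hp, pderiv_X, map_add, smul_eq_mul,
      add_smul, Finset.sum_add_distrib, Finset.smul_sum, mul_smul, Pi.single_apply]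
    simp

def Derivation.ofLeibniz {R A : Type*} [CommSemiring R] [CommRing A] [Algebra R A]
    (v : A → A) (hv_add : ∀ a b : A, v (a + b) = v a + v b)
    (hv_mul : ∀ a b : A, v (a * b) = v a * b + a * v b)
    (hv_algebraMap : ∀ r : R, v (algebraMap R A r) = 0) : Derivation R A A :=
  Derivation.mk'
    { toFun := v
      map_add' := hv_add
      map_smul' := fun (r : R) a => by simp [Algebra.smul_def, hv_mul, hv_algebraMap] }
    fun a b => by simp only [LinearMap.coe_mk, AddHom.coe_mk, hv_mul, smul_eq_mul]; ring

theorem Subfield.exists_sum_mul_eq_of_forall_mem {K ι : Type*} [Field K] [Fintype ι]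
    (F : Subfield K) (a : ι → K) (S : Set (ι → K)) (hSF : ∀ s ∈ S, ∀ i, s i ∈ F)
    (hS : ∀ s ∈ S, ∑ i, s i * a i ∈ F) :
    ∃ b : ι → K, (∀ i, b i ∈ F) ∧ ∀ s ∈ S, ∑ i, s i * a i = ∑ i, s i * b i := by
  classical
  let ψ := Fintype.linearCombination F a
  have hψ (s : ι → F) : ψ s = ∑ i, (s i : K) * a i := Fintype.linearCombination_apply ..
  let W := Submodule.span F {s : ι → F | (fun i => (s i : K)) ∈ S}
  have hW (w : ι → F) (hw : w ∈ W) : ψ w ∈ F := by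
    induction hw using Submodule.span_induction with
    | mem s hs => exact hψ s ▸ hS _ hs
    | zero => rw [map_zero]; exact F.zero_mem
    | add s t _ _ hs ht => rw [map_add]; exact F.add_mem hs ht
    | smul c s _ hs => rw [map_smul]; exact F.mul_mem c.2 hs
  let e : W →ₗ[F] F :=
    { toFun := fun w => ⟨ψ (w : ι → F), hW w w.2⟩
      map_add' := fun w w' => Subtype.ext (map_add ψ (w : ι → F) w')
      map_smul' := fun c w => Subtype.ext (map_smul ψ c (w : ι → F)) }
  obtain ⟨E, hE⟩ := LinearMap.exists_extend e
  refine ⟨fun i => E (fun j => if i = j then 1 else 0), fun i => (E _).2, fun s hs => ?_⟩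
  obtain ⟨t, rfl⟩ : ∃ t : ι → F, (fun i => (t i : K)) = s := ⟨fun i => ⟨s i, hSF s hs i⟩, rfl⟩
  have hEt : (E t : K) = ψ t :=
    congrArg Subtype.val (LinearMap.congr_fun hE (⟨t, Submodule.subset_span hs⟩ : W))
  rw [← hψ, ← hEt, LinearMap.pi_apply_eq_sum_univ E t]
  simp

section Polarization

variable {R : Type*} [CommSemiring R] {m n : Type*} [DecidableEq m]

noncomputable def polarization (ι lam : m) :
    Derivation R (MvPolynomial (m × n) R) (MvPolynomial (m × n) R) :=
  mkDerivation R fun q => if q.1 = ι then X (lam, q.2) else 0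

theorem polarization_X (ι lam : m) (q : m × n) :
    polarization ι lam (X q : MvPolynomial (m × n) R) = if q.1 = ι then X (lam, q.2) else 0 :=
  mkDerivation_X ..

variable [Fintype m] [Fintype n]

theorem polarization_aeval {ι lam : m} (f : m × n → MvPolynomial (m × n) R)
    (hf : ∀ q, polarization ι lam (f q) = if q.1 = ι then f (lam, q.2) else 0)
    (P : MvPolynomial (m × n) R) :
    polarization ι lam (aeval f P) = ∑ κ, aeval f (pderiv (ι, κ) P) * f (lam, κ) := by
  rw [Derivation.map_aeval_eq_sum_pderiv, Fintype.sum_prod_type]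
  simp [hf]

theorem polarization_apply (ι lam : m) (P : MvPolynomial (m × n) R) :
    polarization ι lam P = ∑ κ, pderiv (ι, κ) P * X (lam, κ) := by
  simpa using polarization_aeval X (polarization_X ι lam) P

theorem aeval_polarization {S : Type*} [CommSemiring S] [Algebra R S] (y : m × n → S)
    (ι lam : m) (P : MvPolynomial (m × n) R) :
    aeval y (polarization ι lam P) = ∑ κ, aeval y (pderiv (ι, κ) P) * y (lam, κ) := by
  simp [polarization_apply]

theorem Derivation.map_aeval_eq_sum_polarization {S : Type*} [CommRing S] [Algebra R S]
    (D : Derivation R S S) (y : Matrix m n S) (A : Matrix m m S)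
    (hyA : ∀ i j, D (y i j) = ∑ l, A i l * y l j) (P : MvPolynomial (m × n) R) :
    D (aeval (fun p => y p.1 p.2) P) =
      ∑ ι, ∑ lam, aeval (fun p => y p.1 p.2) (polarization ι lam P) * A ι lam := by
  simp only [D.map_aeval_eq_sum_pderiv, Fintype.sum_prod_type, hyA, aeval_polarization,
    smul_eq_mul, Finset.mul_sum, Finset.sum_mul]
  refine Finset.sum_congr rfl fun ι _ => ?_
  rw [Finset.sum_comm]
  exact Finset.sum_congr rfl fun _ _ => Finset.sum_congr rfl fun _ _ => by ring

end Polarization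

theorem polarization_rightTranslate {n : ℕ} (g : Matrix (Fin n) (Fin n) ℂ) (ι lam : Fin n)
    (P : MvPolynomial (Fin n × Fin n) ℂ) :
    polarization ι lam (rightTranslate g P) = rightTranslate g (polarization ι lam P) := by
  rw [rightTranslate, polarization_aeval, aeval_polarization]
  intro q
  split_ifs with h <;> simp [polarization_X, h, mul_comm]

theorem RTInvariant.polarization {n : ℕ} {S : Subgroup (GL (Fin n) ℂ)}
    {P : MvPolynomial (Fin n × Fin n) ℂ} (hP : RTInvariant S P) (ι lam : Fin n) :
    RTInvariant S (polarization ι lam P) := fun g hg => by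
  rw [← polarization_rightTranslate, hP g hg]

theorem stmt0_general {K : Type*} [Field K] [Algebra ℂ K]
    (v : K → K)
    (hv_add : ∀ a b : K, v (a + b) = v a + v b)
    (hv_mul : ∀ a b : K, v (a * b) = v a * b + a * v b)
    (hvC : ∀ c : ℂ, v (algebraMap ℂ K c) = 0)
    (F : Subfield K)
    (hvF : ∀ x ∈ F, v x ∈ F)
    (n : ℕ) (G : Subgroup (GL (Fin n) ℂ))
    (y : Matrix (Fin n) (Fin n) K)
    (A : Matrix (Fin n) (Fin n) K)
    (hyA : ∀ i j, v (y i j) = ∑ l, A i l * y l j)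
    (hQ : ∀ Q : MvPolynomial (Fin n × Fin n) ℂ, RTInvariant (Gtilde G) Q →
      aeval (fun p : Fin n × Fin n => y p.1 p.2) Q ∈ F) :
    ∃ B : Matrix (Fin n) (Fin n) K, (∀ i j, B i j ∈ F) ∧
      ∀ P : MvPolynomial (Fin n × Fin n) ℂ, RTInvariant (Gtilde G) P →
        ∑ ι, ∑ lam,
          (∑ κ, aeval (fun p : Fin n × Fin n => y p.1 p.2) (pderiv (ι, κ) P) * y lam κ) *
            (A ι lam - B ι lam) = 0 := by
  let D := Derivation.ofLeibniz v hv_add hv_mul hvC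
  let polarizedValue (P : MvPolynomial (Fin n × Fin n) ℂ) (p : Fin n × Fin n) : K :=
    aeval (fun p : Fin n × Fin n => y p.1 p.2) (polarization p.1 p.2 P)
  have hD (P : MvPolynomial (Fin n × Fin n) ℂ) :
      v (aeval (fun p : Fin n × Fin n => y p.1 p.2) P) = ∑ p, polarizedValue P p * A p.1 p.2 := by
    rw [Fintype.sum_prod_type]
    exact D.map_aeval_eq_sum_polarization y A hyA P
  obtain ⟨b, hbF, hb⟩ := F.exists_sum_mul_eq_of_forall_mem (fun p => A p.1 p.2)
    {s | ∃ P, RTInvariant (Gtilde G) P ∧ polarizedValue P = s}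
    (fun _ ⟨P, hP, hs⟩ p => hs ▸ hQ _ (hP.polarization p.1 p.2))
    (fun _ ⟨P, hP, hs⟩ => hs ▸ hD P ▸ hvF _ (hQ P hP))
  refine ⟨fun i j => b (i, j), fun i j => hbF (i, j), fun P hP => ?_⟩
  simp only [← aeval_polarization, mul_sub, Finset.sum_sub_distrib, sub_eq_zero]
  simpa only [Fintype.sum_prod_type] using hb _ ⟨P, hP, rfl⟩

theorem stmt0 {K : Type*} [Field K] [Algebra ℂ K] [CharZero K]
    (v : K → K)
    (hv_add : ∀ a b : K, v (a + b) = v a + v b)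
    (hv_mul : ∀ a b : K, v (a * b) = v a * b + a * v b)
    (hvC : ∀ c : ℂ, v (algebraMap ℂ K c) = 0)
    (k F : Subfield K) (hFk : F ≤ k)
    (hCF : ∀ c : ℂ, algebraMap ℂ K c ∈ F)
    (hvk : ∀ x ∈ k, v x ∈ k) (hvF : ∀ x ∈ F, v x ∈ F)
    (n : ℕ) (hn : 1 ≤ n) (G : Subgroup (GL (Fin n) ℂ))
    (y : Matrix (Fin n) (Fin n) K) (hy : IsUnit y)
    (A : Matrix (Fin n) (Fin n) K) (hA : ∀ i j, A i j ∈ k)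
    (hyA : ∀ i j, v (y i j) = ∑ l, A i l * y l j)
    (hQ : ∀ Q : MvPolynomial (Fin n × Fin n) ℂ, RTInvariant (Gtilde G) Q →
      aeval (fun p : Fin n × Fin n => y p.1 p.2) Q ∈ F) :
    ∃ B : Matrix (Fin n) (Fin n) K, (∀ i j, B i j ∈ F) ∧
      ∀ P : MvPolynomial (Fin n × Fin n) ℂ, RTInvariant (Gtilde G) P →
        ∑ ι, ∑ lam,
          (∑ κ, aeval (fun p : Fin n × Fin n => y p.1 p.2) (pderiv (ι, κ) P) * y lam κ) *
            (A ι lam - B ι lam) = 0 :=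
  stmt0_general v hv_add hv_mul hvC F hvF n G y A hyA hQ
end

section
/- Let n ≥ 1 and let G be a subgroup of GL_n(ℂ) acting on ℂ[X^i_j] by right translation. If P ∈ ℂ[X^i_j] is G-invariant, then for every pair of indices ι, λ ∈ {1,…,n} the polynomial Q^ι_λ := Σ_{κ=1}^n (∂P/∂X^ι_κ) · X^λ_κ is also G-invariant. -/
open MvPolynomial Matrix

/-! The operator `P ↦ ∑ κ, ∂P/∂X^ι_κ · X^λ_κ` commutes with every right translation
`P(X) ↦ P(X g)`: by the chain rule, `∂(P(X g))/∂X^ι_κ = ∑ j, (∂P/∂X^ι_j)(X g) · g^κ_j`, and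
the factor `g` produced by differentiating is exactly the one absorbed by `(X g)^λ_j`.
Hence it maps `G`-invariants to `G`-invariants. -/

theorem MvPolynomial.pderiv_aeval {R σ τ : Type*} [CommSemiring R] [Fintype σ] [DecidableEq σ]
    (f : σ → MvPolynomial τ R) (i : τ) (p : MvPolynomial σ R) :
    pderiv i (aeval f p) = ∑ j, aeval f (pderiv j p) * pderiv i (f j) := by
  induction p using MvPolynomial.induction_on with
  | C a => simp
  | add p q hp hq => simp only [map_add, hp, hq, add_mul, Finset.sum_add_distrib]
  | mul_X p k hp =>
    simp only [map_mul, Derivation.leibniz, smul_eq_mul, aeval_X, hp, pderiv_X, Pi.single_apply,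
      mul_ite, mul_one, mul_zero, map_add, apply_ite (aeval f), map_zero, add_mul, ite_mul,
      zero_mul, Finset.sum_add_distrib, Finset.sum_ite_eq, Finset.mem_univ, if_true,
      Finset.mul_sum, mul_assoc]

open MvPolynomial

section rightTranslate

variable {n : ℕ} (g : Matrix (Fin n) (Fin n) ℂ)

theorem rightTranslate_X (a j : Fin n) :
    rightTranslate g (X (a, j)) = ∑ l, X (a, l) * C (g l j) :=
  aeval_X _ _

theorem pderiv_rightTranslate_X (ι κ a j : Fin n) :
    pderiv (ι, κ) (rightTranslate g (X (a, j))) = if a = ι then C (g κ j) else 0 := by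
  by_cases h : a = ι <;> simp [rightTranslate_X, Pi.single_apply, h]

theorem pderiv_rightTranslate (ι κ : Fin n) (P : MvPolynomial (Fin n × Fin n) ℂ) :
    pderiv (ι, κ) (rightTranslate g P) =
      ∑ j, rightTranslate g (pderiv (ι, j) P) * C (g κ j) := by
  calc pderiv (ι, κ) (rightTranslate g P)
      = ∑ p, rightTranslate g (pderiv p P) * pderiv (ι, κ) (rightTranslate g (X p)) := by
        simp only [rightTranslate, pderiv_aeval, aeval_X]
    _ = ∑ j, rightTranslate g (pderiv (ι, j) P) * C (g κ j) := by
        simp [Fintype.sum_prod_type, pderiv_rightTranslate_X]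

theorem rightTranslate_sum_pderiv_mul_X (ι lam : Fin n) (P : MvPolynomial (Fin n × Fin n) ℂ) :
    rightTranslate g (∑ κ, pderiv (ι, κ) P * X (lam, κ)) =
      ∑ κ, pderiv (ι, κ) (rightTranslate g P) * X (lam, κ) := by
  simp only [map_sum, map_mul, rightTranslate_X, pderiv_rightTranslate, Finset.mul_sum,
    Finset.sum_mul]
  rw [Finset.sum_comm]
  exact Fintype.sum_congr _ _ fun l => Fintype.sum_congr _ _ fun κ => by ring

end rightTranslate

theorem stmt5_general (n : ℕ) (G : Subgroup (GL (Fin n) ℂ))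
    (P : MvPolynomial (Fin n × Fin n) ℂ) (hP : RTInvariant G P)
    (ι lam : Fin n) :
    RTInvariant G (∑ κ, pderiv (ι, κ) P * X (lam, κ)) := by
  intro g hg
  rw [rightTranslate_sum_pderiv_mul_X, hP g hg]

theorem stmt5 (n : ℕ) (hn : 1 ≤ n) (G : Subgroup (GL (Fin n) ℂ))
    (P : MvPolynomial (Fin n × Fin n) ℂ) (hP : RTInvariant G P)
    (ι lam : Fin n) :
    RTInvariant G (∑ κ, pderiv (ι, κ) P * X (lam, κ)) :=
  stmt5_general n G P hP ι lam
end

section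
/- Let R be a commutative ring containing ℚ equipped with a derivation d : R → R. Let I be a proper ideal of R that is a differential ideal (i.e., d(I) ⊆ I) and is maximal among proper differential ideals of R with respect to inclusion. Then I is a prime ideal. -/
/-!
If `xⁿ ∈ I` for a differential ideal `I`, differentiating `x^(m+1) (dx)^k ∈ I` and multiplying by
`dx` trades one factor `x` for two factors `dx`, up to the unit `m + 1` (this is where `ℚ ⊆ R` is
used); hence `(dx)^(2n) ∈ I` and the radical of `I` is again differential. By maximality `I` is
radical. For `a ∉ I`, the colon ideal `(I : a)` is then differential as well: from `xa ∈ I` one gets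
`(x da)² = x da · d(xa) - da dx · xa ∈ I`, so `x da ∈ I` and `dx · a ∈ I`. Maximality again forces
`(I : a) = I`, which is primality.
-/

def Ideal.IsDifferential {R : Type*} [CommRing R] (d : R → R) (I : Ideal R) : Prop :=
  ∀ x ∈ I, d x ∈ I

section Leibniz

variable {R : Type*} [CommRing R] {d : R → R} (hd : ∀ a b, d (a * b) = d a * b + a * d b)
include hd

theorem map_one_eq_zero_of_leibniz : d 1 = 0 := by
  simpa using hd 1 1

theorem map_pow_succ_of_leibniz (x : R) (n : ℕ) : d (x ^ (n + 1)) = (n + 1) * x ^ n * d x := by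
  induction n with
  | zero => simp
  | succ n ih =>
    rw [pow_succ, hd, ih]
    push_cast
    ring

namespace Ideal.IsDifferential

variable {I : Ideal R}

theorem mul_pow_mem_of_mul_pow_mem [Algebra ℚ R] (hI : I.IsDifferential d) {x : R} {m k : ℕ}
    (h : x ^ (m + 1) * d x ^ k ∈ I) : x ^ m * d x ^ (k + 2) ∈ I := by
  have hunit : IsUnit ((m : R) + 1) := by
    have : ((m : R) + 1) = algebraMap ℚ R ((m : ℚ) + 1) := by simp
    exact this ▸ (IsUnit.mk0 _ (by positivity)).map _
  have hcorr : x ^ (m + 1) * d (d x ^ k) * d x ∈ I := by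
    cases k with
    | zero => simp [map_one_eq_zero_of_leibniz hd]
    | succ j =>
      have : x ^ (m + 1) * d (d x ^ (j + 1)) * d x
          = ((j + 1) * d (d x)) * (x ^ (m + 1) * d x ^ (j + 1)) := by
        rw [map_pow_succ_of_leibniz hd]
        ring
      exact this ▸ I.mul_mem_left _ h
  have key : ((m : R) + 1) * (x ^ m * d x ^ (k + 2))
      = d (x ^ (m + 1) * d x ^ k) * d x - x ^ (m + 1) * d (d x ^ k) * d x := by
    rw [hd, map_pow_succ_of_leibniz hd]
    ring
  rw [← I.unit_mul_mem_iff_mem hunit, key]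
  exact I.sub_mem (I.mul_mem_right _ (hI _ h)) hcorr

theorem pow_mem_of_mul_pow_mem [Algebra ℚ R] (hI : I.IsDifferential d) {x : R} {m k : ℕ}
    (h : x ^ m * d x ^ k ∈ I) : d x ^ (k + 2 * m) ∈ I := by
  induction m generalizing k with
  | zero => simpa using h
  | succ m ih =>
    have := ih (hI.mul_pow_mem_of_mul_pow_mem hd h)
    rwa [show k + 2 + 2 * m = k + 2 * (m + 1) by ring] at this

theorem radical [Algebra ℚ R] (hI : I.IsDifferential d) : I.radical.IsDifferential d := by
  rintro x ⟨n, hn⟩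
  exact ⟨2 * n, by simpa using hI.pow_mem_of_mul_pow_mem hd (k := 0) (by simpa using hn)⟩

theorem colon_span_singleton (hI : I.IsDifferential d) (hrad : I.IsRadical) (a : R) :
    (I.colon (span {a})).IsDifferential d := by
  intro x hx
  rw [mem_colon_span_singleton] at hx ⊢
  have hdxa : d x * a + x * d a ∈ I := hd x a ▸ hI _ hx
  have hsq : (x * d a) ^ 2 ∈ I := by
    have : (x * d a) ^ 2 = x * d a * (d x * a + x * d a) - d a * d x * (x * a) := by ring
    exact this ▸ I.sub_mem (I.mul_mem_left _ hdxa) (I.mul_mem_left _ hx)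
  simpa using I.sub_mem hdxa (hrad ⟨2, hsq⟩)

end Ideal.IsDifferential

end Leibniz

theorem stmt14_general {R : Type*} [CommRing R] [Algebra ℚ R]
    (d : R → R)
    (hd_mul : ∀ a b : R, d (a * b) = d a * b + a * d b)
    (I : Ideal R) (hI : I ≠ ⊤) (hdI : ∀ x ∈ I, d x ∈ I)
    (hmax : ∀ J : Ideal R, J ≠ ⊤ → (∀ x ∈ J, d x ∈ J) → I ≤ J → J = I) :
    I.IsPrime := by
  have hdiff : I.IsDifferential d := hdI
  have hrad : I.IsRadical :=
    (hmax _ (Ideal.radical_eq_top.not.mpr hI) (hdiff.radical hd_mul) Ideal.le_radical).le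
  refine ⟨hI, fun {a b} hab => or_iff_not_imp_left.mpr fun ha => ?_⟩
  have hcolon : I.colon (Ideal.span {a}) = I := by
    refine hmax _ ?_ (hdiff.colon_span_singleton hd_mul hrad a) fun x hx => ?_
    · rw [Ideal.ne_top_iff_one, Ideal.mem_colon_span_singleton, one_mul]
      exact ha
    · exact Ideal.mem_colon_span_singleton.mpr (I.mul_mem_right _ hx)
  rw [← hcolon, Ideal.mem_colon_span_singleton, mul_comm]
  exact hab

theorem stmt14 {R : Type*} [CommRing R] [Algebra ℚ R]
    (d : R → R)
    (hd_add : ∀ a b : R, d (a + b) = d a + d b)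
    (hd_mul : ∀ a b : R, d (a * b) = d a * b + a * d b)
    (I : Ideal R) (hI : I ≠ ⊤) (hdI : ∀ x ∈ I, d x ∈ I)
    (hmax : ∀ J : Ideal R, J ≠ ⊤ → (∀ x ∈ J, d x ∈ J) → I ≤ J → J = I) :
    I.IsPrime :=
  stmt14_general d hd_mul I hI hdI hmax
end
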